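/- arXiv:0710.1185 — 4 statements merged into one kernel-verified Lean document; each statement's English description precedes it below -/
import Mathlib

section
/- Let Γ_1, ..., Γ_K be d×d complex Hermitian matrices satisfying Γ_j Γ_k + Γ_k Γ_j = 2δ_{jk} I for all j, k, let a_1, ..., a_K be real numbers with ℓ := ∑_j a_j² > 0 and with a_1/√ℓ ≠ -1, and set a = ∑_j a_j Γ_j, m̂ = c(a/√ℓ + Γ_1) where c = 1/√(2(1 + a_1/√ℓ)), and R = Γ_1 m̂. Then R is unitary and R a R† = √ℓ · Γ_1. -/
open Matrix

/-!
Put `b = a / √ℓ` and `β = a₁ / √ℓ`. The anticommutation relations make `b` a unit vector of the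
Clifford algebra: `b² = 1` and `b Γ₁ + Γ₁ b = 2β`. For two involutions `x, y` with
`x y + y x = 2β`, the element `m̂ = c (x + y)` with `c² · 2(1 + β) = 1` is again an involution and
swaps them: `m̂ x m̂ = y`. Here `m̂` and `Γ₁` are Hermitian involutions, so `R = Γ₁ m̂` is unitary,
and `R b R† = Γ₁ (m̂ b m̂) Γ₁ = Γ₁³ = Γ₁`. Since `|a₁| ≤ √ℓ` and `β ≠ -1`, we have
`1 + β > 0`, so `c² · 2(1 + β) = 1` really holds (`Real.sqrt` of a negative number would be `0`).
-/

theorem eq_of_add_self_eq_two_smul {𝕜 M : Type*} [Field 𝕜] [NeZero (2 : 𝕜)] [AddCommGroup M]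
    [Module 𝕜 M] {x y : M} (h : x + x = (2 : 𝕜) • y) : x = y :=
  smul_right_injective M two_ne_zero ((two_smul 𝕜 x).trans h)

section Clifford

variable {𝕜 A ι : Type*} {Γ : ι → A}

theorem isSelfAdjoint_sum_ofReal_smul [Fintype ι] [AddCommMonoid A] [StarAddMonoid A] [Module ℂ A]
    [StarModule ℂ A] (hΓ : ∀ j, IsSelfAdjoint (Γ j)) (a : ι → ℝ) :
    IsSelfAdjoint (∑ j, (a j : ℂ) • Γ j) :=
  isSelfAdjoint_sum _ fun j _ => IsSelfAdjoint.smul (Complex.conj_ofReal (a j)) (hΓ j)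

variable [DecidableEq ι]

theorem mul_self_eq_one_of_anticomm [Field 𝕜] [NeZero (2 : 𝕜)] [Ring A] [Algebra 𝕜 A]
    (hanti : ∀ j k, Γ j * Γ k + Γ k * Γ j = (if j = k then (2 : 𝕜) else 0) • (1 : A))
    (j : ι) : Γ j * Γ j = 1 :=
  eq_of_add_self_eq_two_smul (by simpa using hanti j j)

variable [Fintype ι]

theorem sum_smul_mul_add_mul_sum_smul [CommRing 𝕜] [Ring A] [Algebra 𝕜 A]
    (hanti : ∀ j k, Γ j * Γ k + Γ k * Γ j = (if j = k then (2 : 𝕜) else 0) • (1 : A))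
    (a : ι → 𝕜) (k : ι) :
    (∑ j, a j • Γ j) * Γ k + Γ k * ∑ j, a j • Γ j = (2 * a k) • (1 : A) := by
  simp only [Finset.sum_mul, Finset.mul_sum, ← Finset.sum_add_distrib, smul_mul_assoc,
    mul_smul_comm, ← smul_add, hanti, smul_smul, mul_ite, mul_zero, ← Finset.sum_smul,
    Finset.sum_ite_eq', Finset.mem_univ, if_true, mul_comm (a k)]

theorem sum_smul_mul_self [Field 𝕜] [NeZero (2 : 𝕜)] [Ring A] [Algebra 𝕜 A]
    (hanti : ∀ j k, Γ j * Γ k + Γ k * Γ j = (if j = k then (2 : 𝕜) else 0) • (1 : A))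
    (a : ι → 𝕜) :
    (∑ j, a j • Γ j) * (∑ j, a j • Γ j) = (∑ j, a j ^ 2) • (1 : A) := by
  set v := ∑ j, a j • Γ j
  have hanti_v : ∀ k, v * Γ k + Γ k * v = (2 * a k) • (1 : A) :=
    sum_smul_mul_add_mul_sum_smul hanti a
  refine eq_of_add_self_eq_two_smul (𝕜 := 𝕜) ?_
  calc v * v + v * v = v * ∑ k, a k • Γ k + (∑ k, a k • Γ k) * v := rfl
    _ = ∑ k, a k • (v * Γ k + Γ k * v) := by
        simp only [Finset.mul_sum, Finset.sum_mul, mul_smul_comm, smul_mul_assoc,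
          ← Finset.sum_add_distrib, smul_add]
    _ = (2 : 𝕜) • (∑ j, a j ^ 2) • (1 : A) := by
        simp only [hanti_v, smul_smul, ← Finset.sum_smul, Finset.mul_sum]
        exact congrArg (· • (1 : A)) (Finset.sum_congr rfl fun k _ => by ring)

end Clifford

section Reflection

variable {𝕜 A : Type*} [CommRing 𝕜] [Ring A] [Algebra 𝕜 A] {x y : A} {β c : 𝕜}

theorem add_mul_self_of_anticomm (hx : x * x = 1) (hy : y * y = 1)
    (hxy : x * y + y * x = (2 * β) • (1 : A)) : (x + y) * (x + y) = (2 * (1 + β)) • (1 : A) := by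
  rw [add_mul, mul_add, mul_add, hx, hy, add_assoc, ← add_assoc (x * y), hxy]
  module

theorem add_mul_mul_add_of_anticomm (hx : x * x = 1) (hy : y * y = 1)
    (hxy : x * y + y * x = (2 * β) • (1 : A)) : (x + y) * x * (x + y) = (2 * (1 + β)) • y := by
  have hyx : y * x = (2 * β) • (1 : A) - x * y := eq_sub_of_add_eq' hxy
  calc (x + y) * x * (x + y) = x * x * x + x * x * y + y * (x * x) + y * x * y := by noncomm_ring
    _ = x + y + y + ((2 * β) • (1 : A) - x * y) * y := by rw [hx, hyx, one_mul, one_mul, mul_one]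
    _ = (2 * (1 + β)) • y := by
        rw [sub_mul, mul_assoc, hy, mul_one, smul_mul_assoc, one_mul]
        module

theorem smul_add_mul_self_of_anticomm (hx : x * x = 1) (hy : y * y = 1)
    (hxy : x * y + y * x = (2 * β) • (1 : A)) (hc : c * c * (2 * (1 + β)) = 1) :
    (c • (x + y)) * (c • (x + y)) = 1 := by
  rw [smul_mul_smul_comm, add_mul_self_of_anticomm hx hy hxy, smul_smul, hc, one_smul]

theorem smul_add_mul_mul_smul_add_of_anticomm (hx : x * x = 1) (hy : y * y = 1)
    (hxy : x * y + y * x = (2 * β) • (1 : A)) (hc : c * c * (2 * (1 + β)) = 1) :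
    (c • (x + y)) * x * (c • (x + y)) = y := by
  rw [smul_mul_assoc, smul_mul_assoc, mul_smul_comm, smul_smul,
    add_mul_mul_add_of_anticomm hx hy hxy, smul_smul, hc, one_smul]

end Reflection

section Unitary

variable {R : Type*} [Monoid R] [StarMul R] {u v : R}

theorem mem_unitary_of_isSelfAdjoint_of_mul_self_eq_one (hu : IsSelfAdjoint u) (h : u * u = 1) :
    u ∈ unitary R :=
  Unitary.mem_iff.2 ⟨by rw [hu.star_eq, h], by rw [hu.star_eq, h]⟩

theorem mul_mul_mul_star_eq_of_conj (hu : IsSelfAdjoint u) (hv : IsSelfAdjoint v) (hu2 : u * u = 1)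
    {x : R} (hvxv : v * x * v = u) : u * v * x * star (u * v) = u := by
  calc u * v * x * star (u * v) = u * (v * x * v) * u := by
        simp only [star_mul, hu.star_eq, hv.star_eq, mul_assoc]
    _ = u := by rw [hvxv, hu2, one_mul]

end Unitary

theorem one_add_div_sqrt_pos {a ℓ : ℝ} (hℓ : 0 < ℓ) (h : a ^ 2 ≤ ℓ) (hne : a / √ℓ ≠ -1) :
    0 < 1 + a / √ℓ := by
  have hle : -1 ≤ a / √ℓ := by
    rw [le_div_iff₀ (Real.sqrt_pos.2 hℓ), neg_one_mul, neg_le]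
    exact (neg_le_abs a).trans (Real.abs_le_sqrt h)
  exact neg_lt_iff_pos_add'.1 (hle.lt_of_ne' hne)

theorem sum_div_sqrt_sq {ι : Type*} [Fintype ι] {a : ι → ℝ} {ℓ : ℝ} (hℓ : ℓ = ∑ j, a j ^ 2)
    (hpos : 0 < ℓ) : ∑ j, (a j / √ℓ) ^ 2 = 1 := by
  simp only [div_pow, ← Finset.sum_div, Real.sq_sqrt hpos.le, ← hℓ, div_self hpos.ne']

theorem one_div_sqrt_mul_self_mul {x : ℝ} (hx : 0 < x) : 1 / √x * (1 / √x) * x = 1 := by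
  rw [div_mul_div_comm, one_mul, Real.mul_self_sqrt hx.le, one_div_mul_cancel hx.ne']

/-- The rotation `R = Γ_1 m̂`, where `m̂ = c (a/√ℓ + Γ_1)` with
`c = 1/√(2(1 + a_1/√ℓ))`, is unitary and maps the "vector" `a = ∑_j a_j Γ_j`
to `√ℓ Γ_1`, where `ℓ = ∑_j a_j²`. -/
theorem rotation_vector_to_first_generator
    {d K : ℕ} (hK : 0 < K)
    (Γ : Fin K → Matrix (Fin d) (Fin d) ℂ)
    (hherm : ∀ j, (Γ j).IsHermitian)
    (hanti : ∀ j k, Γ j * Γ k + Γ k * Γ j =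
      (if j = k then (2 : ℂ) else 0) • (1 : Matrix (Fin d) (Fin d) ℂ))
    (a : Fin K → ℝ) (ℓ : ℝ) (hℓ : ℓ = ∑ j, a j ^ 2) (hpos : 0 < ℓ)
    (hne : a ⟨0, hK⟩ / Real.sqrt ℓ ≠ -1) :
    let A : Matrix (Fin d) (Fin d) ℂ := ∑ j, (a j : ℂ) • Γ j
    let c : ℝ := 1 / Real.sqrt (2 * (1 + a ⟨0, hK⟩ / Real.sqrt ℓ))
    let m : Matrix (Fin d) (Fin d) ℂ :=
      (c : ℂ) • (((Real.sqrt ℓ : ℝ) : ℂ)⁻¹ • A + Γ ⟨0, hK⟩)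
    let R : Matrix (Fin d) (Fin d) ℂ := Γ ⟨0, hK⟩ * m
    R ∈ Matrix.unitaryGroup (Fin d) ℂ ∧
    R * A * Rᴴ = ((Real.sqrt ℓ : ℝ) : ℂ) • Γ ⟨0, hK⟩ := by
  intro A c m R
  set γ := Γ ⟨0, hK⟩
  set s := √ℓ
  set β := a ⟨0, hK⟩ / s
  have hs : (s : ℂ) ≠ 0 := Complex.ofReal_ne_zero.2 (Real.sqrt_pos.2 hpos).ne'
  set b := ∑ j, ((a j / s : ℝ) : ℂ) • Γ j
  have hA : A = (s : ℂ) • b := by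
    simp only [A, b, Finset.smul_sum, smul_smul, Complex.ofReal_div, mul_div_cancel₀ _ hs]
  have hm : m = (c : ℂ) • (b + γ) := by
    show (c : ℂ) • ((s : ℂ)⁻¹ • A + γ) = _
    rw [hA, smul_smul, inv_mul_cancel₀ hs, one_smul]
  have hb2 : b * b = 1 := by
    have hsumℂ : ∑ j, ((a j / s : ℝ) : ℂ) ^ 2 = 1 := by exact_mod_cast sum_div_sqrt_sq hℓ hpos
    rw [sum_smul_mul_self hanti, hsumℂ, one_smul]
  have hbγ : b * γ + γ * b = (2 * (β : ℂ)) • 1 := sum_smul_mul_add_mul_sum_smul hanti _ _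
  have hγ2 : γ * γ = 1 := mul_self_eq_one_of_anticomm hanti _
  have hc : (c : ℂ) * c * (2 * (1 + β)) = 1 := by
    have ha₀ : a ⟨0, hK⟩ ^ 2 ≤ ℓ :=
      hℓ ▸ Finset.single_le_sum (fun j _ => sq_nonneg (a j)) (Finset.mem_univ _)
    exact_mod_cast one_div_sqrt_mul_self_mul (mul_pos two_pos (one_add_div_sqrt_pos hpos ha₀ hne))
  have hγH : IsSelfAdjoint γ := (hherm _).isSelfAdjoint
  have hmH : IsSelfAdjoint m := hm ▸ IsSelfAdjoint.smul (Complex.conj_ofReal c)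
    ((isSelfAdjoint_sum_ofReal_smul (fun j => (hherm j).isSelfAdjoint) _).add hγH)
  refine ⟨Submonoid.mul_mem _ (mem_unitary_of_isSelfAdjoint_of_mul_self_eq_one hγH hγ2)
    (mem_unitary_of_isSelfAdjoint_of_mul_self_eq_one hmH
      (hm ▸ smul_add_mul_self_of_anticomm hb2 hγ2 hbγ hc)), ?_⟩
  rw [hA, ← star_eq_conjTranspose, mul_smul_comm, smul_mul_assoc]
  exact congrArg _ (mul_mul_mul_star_eq_of_conj hγH hmH hγ2
    (hm ▸ smul_add_mul_mul_smul_add_of_anticomm hb2 hγ2 hbγ hc))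
end

section
/- (Meta-uncertainty relation) Let Γ_0, Γ_1, ..., Γ_{K-1} be d×d complex Hermitian matrices satisfying Γ_j Γ_k + Γ_k Γ_j = 2δ_{jk} I for all j, k, and let ρ be a density matrix (positive semidefinite with trace 1). Then ∑_{j=0}^{K-1} (Tr(ρ Γ_j))² ≤ 1, where each Tr(ρ Γ_j) is real. -/
/-!
Put `c_j = Tr(ρ Γ_j)` and `A = ∑ c_j Γ_j`. The anticommutation relations make the cross terms of
`A²` cancel, so `A² = S • 1` with `S = ∑ c_j²`, while `Tr(ρ A) = S`. The variance of the Hermitian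
matrix `A` in the state `ρ`, namely `Tr(ρ A²) - Tr(ρ A)² = S - S²`, is nonnegative; hence `S ≤ 1`.
-/

open Matrix ComplexOrder

theorem sum_smul_mul_self_of_anticommute {ι 𝕜 A : Type*} [Fintype ι] [DecidableEq ι]
    [Field 𝕜] [CharZero 𝕜] [Ring A] [Algebra 𝕜 A] {Γ : ι → A}
    (hanti : ∀ j k, Γ j * Γ k + Γ k * Γ j = (if j = k then (2 : 𝕜) else 0) • (1 : A))
    (c : ι → 𝕜) :
    (∑ j, c j • Γ j) * (∑ j, c j • Γ j) = (∑ j, c j ^ 2) • (1 : A) := by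
  have hexpand : (∑ j, c j • Γ j) * (∑ j, c j • Γ j) = ∑ j, ∑ k, (c j * c k) • (Γ j * Γ k) := by
    simp only [Finset.sum_mul_sum, smul_mul_smul_comm]
  apply smul_right_injective A (two_ne_zero : (2 : 𝕜) ≠ 0)
  calc (2 : 𝕜) • ((∑ j, c j • Γ j) * (∑ j, c j • Γ j))
      = ∑ j, ∑ k, (c j * c k) • (Γ j * Γ k + Γ k * Γ j) := by
        rw [two_smul, hexpand]
        simp only [smul_add, Finset.sum_add_distrib]
        congr 1
        rw [Finset.sum_comm]
        simp only [mul_comm]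
    _ = ∑ j, (2 * c j ^ 2) • (1 : A) := by
        simp only [hanti, smul_smul, mul_ite, mul_zero]
        simp only [ite_smul, zero_smul, Finset.sum_ite_eq, Finset.mem_univ, if_true, sq, mul_comm]
    _ = (2 : 𝕜) • (∑ j, c j ^ 2) • (1 : A) := by
        rw [← Finset.sum_smul, ← Finset.mul_sum, smul_smul]

namespace Matrix.PosSemidef

variable {n 𝕜 : Type*} [Fintype n] [RCLike 𝕜] {ρ : Matrix n n 𝕜}

theorem re_trace_mul_conjTranspose_mul_self_nonneg (hρ : ρ.PosSemidef) (M : Matrix n n 𝕜) :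
    0 ≤ RCLike.re (ρ * (Mᴴ * M)).trace := by
  rw [trace_mul_cycle', ← Matrix.mul_assoc]
  exact (RCLike.nonneg_iff.mp (hρ.mul_mul_conjTranspose_same M).trace_nonneg).1

theorem sq_re_trace_mul_le [DecidableEq n] (hρ : ρ.PosSemidef) (hρtr : ρ.trace = 1)
    {A : Matrix n n 𝕜} (hA : A.IsHermitian) :
    RCLike.re (ρ * A).trace ^ 2 ≤ RCLike.re (ρ * (A * A)).trace := by
  set t := RCLike.re (ρ * A).trace
  set M := A - (t : 𝕜) • 1
  have hM : Mᴴ = M := by simp [M, hA.eq, conjTranspose_sub]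
  have hexpand : (ρ * (M * M)).trace
      = (ρ * (A * A)).trace - 2 * t * (ρ * A).trace + t ^ 2 * ρ.trace := by
    simp only [M, algebraMap_smul, mul_sub, sub_mul, Algebra.smul_mul_assoc, one_mul,
      Algebra.mul_smul_comm, mul_one, trace_sub, trace_smul, RCLike.real_smul_eq_coe_mul]
    ring
  have hvar := hρ.re_trace_mul_conjTranspose_mul_self_nonneg M
  rw [hM, hexpand, hρtr] at hvar
  simp only [mul_one, map_add, map_sub, RCLike.mul_re, RCLike.ofNat_re, RCLike.ofReal_re,
    RCLike.ofNat_im, RCLike.ofReal_im, mul_zero, sub_zero, RCLike.mul_im, zero_mul, add_zero,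
    RCLike.re_ofReal_pow] at hvar
  nlinarith

end Matrix.PosSemidef

/-- Meta-uncertainty relation: for a family of anticommuting Hermitian
involutions `Γ_j` and any density matrix `ρ`, the squared expectations satisfy
`∑_j (Tr(ρ Γ_j))² ≤ 1`. -/
theorem meta_uncertainty_relation
    {d K : ℕ}
    (Γ : Fin K → Matrix (Fin d) (Fin d) ℂ)
    (hherm : ∀ j, (Γ j).IsHermitian)
    (hanti : ∀ j k, Γ j * Γ k + Γ k * Γ j =
      (if j = k then (2 : ℂ) else 0) • (1 : Matrix (Fin d) (Fin d) ℂ))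
    (ρ : Matrix (Fin d) (Fin d) ℂ) (hρ : ρ.PosSemidef) (hρtr : ρ.trace = 1) :
    ∑ j, ((ρ * Γ j).trace.re) ^ 2 ≤ 1 := by
  set c : Fin K → ℝ := fun j => (ρ * Γ j).trace.re
  set A := ∑ j, (c j : ℂ) • Γ j
  have hA : A.IsHermitian := by
    simp [A, IsHermitian, conjTranspose_sum, (hherm _).eq]
  have htrA : (ρ * A).trace.re = ∑ j, c j ^ 2 := by
    simp [A, Finset.mul_sum, trace_sum, sq, c]
  have htrAA : (ρ * (A * A)).trace.re = ∑ j, c j ^ 2 := by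
    rw [sum_smul_mul_self_of_anticommute hanti]
    simp [hρtr, ← Complex.ofReal_pow]
  have hvar := hρ.sq_re_trace_mul_le hρtr hA
  simp only [RCLike.re_to_complex, htrA, htrAA] at hvar
  nlinarith [Finset.sum_nonneg fun j (_ : j ∈ Finset.univ) => sq_nonneg (c j)]
end

section
/- (Theorem 1, collision-entropy uncertainty relation, lower bound) Let Γ_0, ..., Γ_{K-1} (K ≥ 1) be d×d complex Hermitian matrices satisfying Γ_j Γ_k + Γ_k Γ_j = 2δ_{jk} I, with spectral projectors Γ_j^b = (I + (-1)^b Γ_j)/2 for b ∈ {0,1}. For a density matrix ρ define the collision entropy of measuring Γ_j on ρ as H₂(Γ_j|ρ) = -log₂( (Tr(Γ_j^0 ρ))² + (Tr(Γ_j^1 ρ))² ). Then for every density matrix ρ, (1/K) ∑_{j=0}^{K-1} H₂(Γ_j|ρ) ≥ 1 - log₂(1 + 1/K). -/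
open Matrix ComplexOrder

/-!
Write `t_j = Tr(Γ_j ρ)`. The outcome probabilities of `Γ_j` are `(1 ± t_j)/2`, so
`H₂(Γ_j|ρ) = 1 - log₂(1 + t_j²)`. By anticommutation the Hermitian matrix `M = ∑ t_j Γ_j`
squares to `(∑ t_j²) • 1`, so `√(∑ t_j²) • 1 - M` is positive semidefinite and
`∑ t_j² = Tr(M ρ) ≤ √(∑ t_j²)`, i.e. `∑ t_j² ≤ 1`. Concavity of `log` then bounds the mean of
`log₂(1 + t_j²)` by `log₂(1 + 1/K)`.
-/

namespace Matrix

variable {n 𝕜 : Type*} [Fintype n] [RCLike 𝕜]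

open scoped MatrixOrder Matrix.Norms.L2Operator in
theorem PosSemidef.trace_mul_nonneg {A B : Matrix n n 𝕜} (hA : A.PosSemidef)
    (hB : B.PosSemidef) : 0 ≤ (A * B).trace := by
  classical
  obtain ⟨C, rfl⟩ := CStarAlgebra.nonneg_iff_eq_star_mul_self.mp hA.nonneg
  rw [star_eq_conjTranspose, Matrix.mul_assoc, trace_mul_comm]
  exact (hB.mul_mul_conjTranspose_same C).trace_nonneg

open scoped MatrixOrder in
theorem IsHermitian.posSemidef_of_mul_self_eq_smul {A : Matrix n n 𝕜} (hA : A.IsHermitian)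
    {r : ℝ} (hr : 0 < r) (hAA : A * A = (r : 𝕜) • A) : A.PosSemidef := by
  have hP : IsStarProjection ((r⁻¹ : 𝕜) • A) :=
    { isIdempotentElem := by
        rw [IsIdempotentElem, smul_mul_smul_comm, hAA, smul_smul]
        congr 1
        field_simp
      isSelfAdjoint := by
        rw [IsSelfAdjoint, star_smul, ← RCLike.ofReal_inv, RCLike.star_def, RCLike.conj_ofReal,
          hA.isSelfAdjoint.star_eq] }
  have hA' : A = (r : 𝕜) • ((r⁻¹ : 𝕜) • A) := by
    rw [smul_smul, mul_inv_cancel₀ (by exact_mod_cast hr.ne'), one_smul]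
  rw [hA']
  exact (nonneg_iff_posSemidef.mp hP.nonneg).smul (by exact_mod_cast hr.le)

variable [DecidableEq n]

theorem IsHermitian.re_trace_mul_le_of_mul_self_eq {M ρ : Matrix n n 𝕜} (hM : M.IsHermitian)
    {c : ℝ} (hc : 0 ≤ c) (hMM : M * M = ((c ^ 2 : ℝ) : 𝕜) • 1) (hρ : ρ.PosSemidef)
    (hρtr : ρ.trace = 1) : RCLike.re (M * ρ).trace ≤ c := by
  rcases hc.eq_or_lt with rfl | hc
  · have hM0 : M = 0 := by
      rw [← conjTranspose_mul_self_eq_zero, hM.eq, hMM]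
      simp
    simp [hM0]
  -- `c • 1 - M` is `2c` times the spectral projection of `M` onto the eigenvalue `-c`.
  have hA : (((c : 𝕜) • 1 - M) * ((c : 𝕜) • 1 - M)) = ((2 * c : ℝ) : 𝕜) • ((c : 𝕜) • 1 - M) := by
    simp only [sub_mul, mul_sub, smul_mul_assoc, mul_smul_comm, Matrix.one_mul, Matrix.mul_one,
      hMM]
    push_cast
    module
  have hAherm : ((c : 𝕜) • 1 - M).IsHermitian := by
    refine IsHermitian.sub ?_ hM
    simp [IsHermitian]
  have hnonneg := (hAherm.posSemidef_of_mul_self_eq_smul (by positivity) hA).trace_mul_nonneg hρ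
  rw [Matrix.sub_mul, trace_sub, smul_mul_assoc, Matrix.one_mul, trace_smul, hρtr, smul_eq_mul,
    mul_one, sub_nonneg, RCLike.le_iff_re_im] at hnonneg
  simpa using hnonneg.1

theorem sum_smul_mul_self_of_anticommute {ι : Type*} [Fintype ι] [DecidableEq ι]
    (Γ : ι → Matrix n n 𝕜)
    (hanti : ∀ j k, Γ j * Γ k + Γ k * Γ j = (if j = k then (2 : 𝕜) else 0) • (1 : Matrix n n 𝕜))
    (t : ι → 𝕜) : (∑ j, t j • Γ j) * (∑ j, t j • Γ j) = (∑ j, t j ^ 2) • 1 := by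
  have hexpand : (∑ j, t j • Γ j) * (∑ j, t j • Γ j) = ∑ j, ∑ k, (t j * t k) • (Γ j * Γ k) := by
    simp only [Finset.sum_mul_sum, smul_mul_smul_comm]
  have hexpand' : (∑ j, t j • Γ j) * (∑ j, t j • Γ j) = ∑ j, ∑ k, (t k * t j) • (Γ k * Γ j) := by
    rw [hexpand, Finset.sum_comm]
  have hdouble : (2 : 𝕜) • ((∑ j, t j • Γ j) * (∑ j, t j • Γ j)) =
      ∑ j, ∑ k, (t j * t k) • (Γ j * Γ k + Γ k * Γ j) := by
    rw [two_smul]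
    nth_rw 1 [hexpand]
    rw [hexpand', ← Finset.sum_add_distrib]
    refine Finset.sum_congr rfl fun j _ => ?_
    rw [← Finset.sum_add_distrib]
    refine Finset.sum_congr rfl fun k _ => ?_
    rw [mul_comm (t k), ← smul_add]
  apply smul_right_injective _ (two_ne_zero (α := 𝕜))
  change (2 : 𝕜) • _ = (2 : 𝕜) • _
  rw [hdouble]
  simp only [hanti, smul_smul, mul_ite, mul_zero, ← Finset.sum_smul, Finset.sum_ite_eq,
    Finset.mem_univ, if_true, Finset.mul_sum]
  exact congrArg (· • _) (Finset.sum_congr rfl fun j _ => by ring)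

theorem sum_sq_re_trace_mul_le_one {ι : Type*} [Fintype ι] [DecidableEq ι]
    (Γ : ι → Matrix n n 𝕜) (hherm : ∀ j, (Γ j).IsHermitian)
    (hanti : ∀ j k, Γ j * Γ k + Γ k * Γ j = (if j = k then (2 : 𝕜) else 0) • (1 : Matrix n n 𝕜))
    {ρ : Matrix n n 𝕜} (hρ : ρ.PosSemidef) (hρtr : ρ.trace = 1) :
    ∑ j, RCLike.re (Γ j * ρ).trace ^ 2 ≤ 1 := by
  set t : ι → ℝ := fun j => RCLike.re (Γ j * ρ).trace
  set s := ∑ j, t j ^ 2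
  set M := ∑ j, (t j : 𝕜) • Γ j
  have hs : 0 ≤ s := Finset.sum_nonneg fun j _ => sq_nonneg (t j)
  have hMherm : M.IsHermitian := by
    simp [M, IsHermitian, conjTranspose_sum, fun j => (hherm j).eq]
  have hMM : M * M = ((√s ^ 2 : ℝ) : 𝕜) • 1 := by
    rw [sum_smul_mul_self_of_anticommute Γ hanti, Real.sq_sqrt hs]
    simp [s]
  have htrace : RCLike.re (M * ρ).trace = s := by
    simp only [M, Finset.sum_mul, trace_sum, smul_mul_assoc, trace_smul, map_sum, smul_eq_mul,
      RCLike.re_ofReal_mul, s, t, sq]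
  have hle := hMherm.re_trace_mul_le_of_mul_self_eq (Real.sqrt_nonneg s) hMM hρ hρtr
  rw [htrace, Real.le_sqrt hs hs] at hle
  nlinarith

theorem re_trace_projectors_sq_add_sq (G ρ : Matrix n n 𝕜) (hρtr : ρ.trace = 1) :
    RCLike.re (((2 : 𝕜)⁻¹ • (1 + G)) * ρ).trace ^ 2 +
        RCLike.re (((2 : 𝕜)⁻¹ • (1 - G)) * ρ).trace ^ 2 =
      (1 + RCLike.re (G * ρ).trace ^ 2) / 2 := by
  have hhalf : (2 : 𝕜)⁻¹ = ((2⁻¹ : ℝ) : 𝕜) := by push_cast; rfl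
  simp only [hhalf, smul_mul_assoc, add_mul, sub_mul, Matrix.one_mul, trace_smul, trace_add,
    trace_sub, hρtr, smul_eq_mul, RCLike.re_ofReal_mul, map_add, map_sub, RCLike.one_re]
  ring

end Matrix

theorem Real.mean_logb_one_add_sq_le {ι : Type*} [Fintype ι] [Nonempty ι] {x : ι → ℝ}
    (hx : ∑ i, x i ^ 2 ≤ 1) :
    (Fintype.card ι : ℝ)⁻¹ * ∑ i, logb 2 (1 + x i ^ 2) ≤ logb 2 (1 + 1 / Fintype.card ι) := by
  set w : ℝ := (Fintype.card ι : ℝ)⁻¹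
  have hw : 0 < w := by positivity
  have hwsum : ∑ _i : ι, w = 1 := by simp [w]
  have hjensen := strictConcaveOn_log_Ioi.concaveOn.le_map_sum (t := Finset.univ)
    (w := fun _ => w) (p := fun i => 1 + x i ^ 2) (fun _ _ => hw.le) hwsum
    (fun i _ => show (0 : ℝ) < 1 + x i ^ 2 by positivity)
  have hmean : ∑ i, w • (1 + x i ^ 2) ≤ 1 + 1 / (Fintype.card ι : ℝ) := by
    simp only [smul_eq_mul, mul_add, Finset.sum_add_distrib, hwsum, ← Finset.mul_sum, mul_one]
    rw [one_div]
    exact add_le_add_right (mul_le_of_le_one_right hw.le hx) 1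
  calc w * ∑ i, logb 2 (1 + x i ^ 2) = (∑ i, w • log (1 + x i ^ 2)) / log 2 := by
        simp only [logb, Finset.mul_sum, Finset.sum_div, smul_eq_mul, mul_div_assoc]
    _ ≤ log (1 + 1 / Fintype.card ι) / log 2 := by
        gcongr
        exact hjensen.trans (log_le_log (by positivity) hmean)
    _ = logb 2 (1 + 1 / Fintype.card ι) := rfl

/-- Theorem 1 (collision-entropy uncertainty relation, lower bound): for `K`
anticommuting Hermitian involutions `Γ_j` with spectral projectors
`Γ_j^b = (𝟙 + (-1)^b Γ_j)/2` and any density matrix `ρ`,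
`(1/K) ∑_j H₂(Γ_j|ρ) ≥ 1 - log₂(1 + 1/K)`, where
`H₂(Γ_j|ρ) = -log₂((Tr(Γ_j^0 ρ))² + (Tr(Γ_j^1 ρ))²)`. -/
theorem collision_entropy_uncertainty_relation
    {d K : ℕ} (hK : 1 ≤ K)
    (Γ : Fin K → Matrix (Fin d) (Fin d) ℂ)
    (hherm : ∀ j, (Γ j).IsHermitian)
    (hanti : ∀ j k, Γ j * Γ k + Γ k * Γ j =
      (if j = k then (2 : ℂ) else 0) • (1 : Matrix (Fin d) (Fin d) ℂ))
    (ρ : Matrix (Fin d) (Fin d) ℂ) (hρ : ρ.PosSemidef) (hρtr : ρ.trace = 1) :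
    1 - Real.logb 2 (1 + 1 / K) ≤
      (K : ℝ)⁻¹ * ∑ j, -Real.logb 2
        (((((2 : ℂ)⁻¹ • (1 + Γ j)) * ρ).trace.re) ^ 2 +
          ((((2 : ℂ)⁻¹ • (1 - Γ j)) * ρ).trace.re) ^ 2) := by
  have : Nonempty (Fin K) := Fin.pos_iff_nonempty.mp hK
  have hbloch := Matrix.sum_sq_re_trace_mul_le_one Γ hherm hanti hρ hρtr
  have hmean := Real.mean_logb_one_add_sq_le hbloch
  simp only [Fintype.card_fin, RCLike.re_to_complex] at hmean
  have hentropy : ∀ j, -Real.logb 2 (((((2 : ℂ)⁻¹ • (1 + Γ j)) * ρ).trace.re) ^ 2 +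
      ((((2 : ℂ)⁻¹ • (1 - Γ j)) * ρ).trace.re) ^ 2) =
      1 - Real.logb 2 (1 + ((Γ j * ρ).trace.re) ^ 2) := fun j => by
    have hcollision := Matrix.re_trace_projectors_sq_add_sq (Γ j) ρ hρtr
    simp only [RCLike.re_to_complex] at hcollision
    rw [hcollision, Real.logb_div (by positivity) two_ne_zero, Real.logb_self_eq_one one_lt_two]
    ring
  have hK0 : (K : ℝ) ≠ 0 := by positivity
  simp only [hentropy, Finset.sum_sub_distrib, Finset.sum_const, Finset.card_univ, Fintype.card_fin,
    nsmul_eq_mul, mul_one, mul_sub, inv_mul_cancel₀ hK0]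
  linarith
end

section
/- The function f(t) = h((1 + √t)/2), where h(p) = -p log₂ p - (1-p) log₂(1-p) is the binary Shannon entropy (with 0·log₂0 := 0), is concave on the interval [0,1]. -/
/-!
With `s = √t`, the chain rule gives `f'(t) = -(log (1 + s) - log (1 - s)) / (4 s log 2)`, and
`(log (1 + s) - log (1 - s)) / s = ∑ 2 s^(2k) / (2k + 1)` is increasing in `s`. Hence `f'` is
antitone on `(0, 1)`, and `f`, being continuous on `[0, 1]`, is concave there.
-/

open Real Set

lemma monotoneOn_log_one_add_sub_log_one_sub_div :
    MonotoneOn (fun s : ℝ => (log (1 + s) - log (1 - s)) / s) (Ioo 0 1) := by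
  intro a ha b hb hab
  have series {s : ℝ} (hs : s ∈ Ioo (0 : ℝ) 1) :
      HasSum (fun k : ℕ => 2 * (1 / (2 * k + 1)) * s ^ (2 * k))
        ((log (1 + s) - log (1 - s)) / s) := by
    refine ((hasSum_log_sub_log_of_abs_lt_one (abs_lt.2 ⟨by linarith [hs.1], hs.2⟩)).div_const
      s).congr_fun fun k => ?_
    rw [pow_succ, ← mul_assoc, mul_div_cancel_right₀ _ hs.1.ne']
  refine hasSum_le (fun k => ?_) (series ha) (series hb)
  gcongr
  exact ha.1.le

lemma sqrt_mem_Ioo_zero_one {t : ℝ} (ht : t ∈ Ioo (0 : ℝ) 1) : √t ∈ Ioo (0 : ℝ) 1 :=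
  ⟨sqrt_pos.2 ht.1, (sqrt_lt_sqrt ht.1.le ht.2).trans_eq sqrt_one⟩

lemma hasDerivAt_binEntropy_one_add_sqrt_div_two {t : ℝ} (ht : t ∈ Ioo (0 : ℝ) 1) :
    HasDerivAt (fun t => binEntropy ((1 + √t) / 2))
      (-((log (1 + √t) - log (1 - √t)) / √t) / 4) t := by
  obtain ⟨hs₀, hs₁⟩ := sqrt_mem_Ioo_zero_one ht
  have hinner : HasDerivAt (fun t => (1 + √t) / 2) (1 / (2 * √t) / 2) t :=
    ((hasDerivAt_sqrt ht.1.ne').const_add 1).div_const 2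
  refine ((hasDerivAt_binEntropy (by positivity) (by linarith)).comp t hinner).congr_deriv ?_
  rw [show 1 - (1 + √t) / 2 = (1 - √t) / 2 by ring, log_div (by linarith) two_ne_zero,
    log_div (by linarith) two_ne_zero]
  field_simp
  ring

lemma concaveOn_binEntropy_one_add_sqrt_div_two :
    ConcaveOn ℝ (Icc 0 1) (fun t => binEntropy ((1 + √t) / 2)) := by
  apply AntitoneOn.concaveOn_of_deriv (convex_Icc 0 1) (by fun_prop)
  · rw [interior_Icc]
    exact fun t ht =>
      (hasDerivAt_binEntropy_one_add_sqrt_div_two ht).differentiableAt.differentiableWithinAt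
  · rw [interior_Icc]
    intro a ha b hb hab
    rw [(hasDerivAt_binEntropy_one_add_sqrt_div_two ha).deriv,
      (hasDerivAt_binEntropy_one_add_sqrt_div_two hb).deriv]
    have hmono := monotoneOn_log_one_add_sub_log_one_sub_div (sqrt_mem_Ioo_zero_one ha)
      (sqrt_mem_Ioo_zero_one hb) (sqrt_le_sqrt hab)
    linarith

lemma neg_mul_logb_sub_mul_logb_one_sub (b p : ℝ) :
    -(p * logb b p) - (1 - p) * logb b (1 - p) = (log b)⁻¹ * binEntropy p := by
  simp only [binEntropy, logb, log_inv]
  ring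

/-- The function `f(t) = h((1 + √t)/2)`, where `h` is the binary Shannon entropy
`h(p) = -p log₂ p - (1-p) log₂ (1-p)`, is concave on `[0, 1]`. -/
theorem concaveOn_binaryEntropy_sqrt :
    ConcaveOn ℝ (Set.Icc (0 : ℝ) 1) (fun t =>
      -(((1 + Real.sqrt t) / 2) * Real.logb 2 ((1 + Real.sqrt t) / 2)) -
        (1 - (1 + Real.sqrt t) / 2) * Real.logb 2 (1 - (1 + Real.sqrt t) / 2)) := by
  simp only [neg_mul_logb_sub_mul_logb_one_sub]
  exact concaveOn_binEntropy_one_add_sqrt_div_two.smul (by positivity)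
end
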